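/- Let n be coprime to 3 and let C be a cyclic code of length n over R = ℤ₉[u]/(u²-u) with generating idempotent e(X). Then the dual code C^⊥ is cyclic with generating idempotent 1 - e(X^{-1}), where e(X^{-1}) denotes the image of e(X) under X ↦ X^{n-1} in R[X]/(Xⁿ-1). -/

import Mathlib

open Polynomial

noncomputable section

/-- The ring `R = ℤ₉[u]/(u² - u)`. -/
abbrev R9 : Type := Polynomial (ZMod 9) ⧸ Ideal.span {(X : Polynomial (ZMod 9)) ^ 2 - X}

instance : CommRing R9 := Ideal.Quotient.commRing _

/-- The element `u` of `R`, the image of `X`. -/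
def uu : R9 := Ideal.Quotient.mk _ (X : Polynomial (ZMod 9))

/-- The canonical embedding `ℤ₉ → R`. -/
def ι : ZMod 9 →+* R9 :=
  (Ideal.Quotient.mk _).comp (Polynomial.C : ZMod 9 →+* Polynomial (ZMod 9))
/-- The quotient ring `R[X]/(Xⁿ - 1)`. -/
abbrev Rn (n : ℕ) : Type := Polynomial R9 ⧸ Ideal.span {(X : Polynomial R9) ^ n - 1}

instance (n : ℕ) : CommRing (Rn n) := Ideal.Quotient.commRing _

/-- The constants embedding `R → R[X]/(Xⁿ-1)`. -/
def ofR (n : ℕ) : R9 →+* Rn n :=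
  (Ideal.Quotient.mk _).comp (Polynomial.C : R9 →+* Polynomial R9)

/-- The image of `X` in `R[X]/(Xⁿ-1)`. -/
def xbar (n : ℕ) : Rn n := Ideal.Quotient.mk _ (X : Polynomial R9)

/-- A word `c ∈ Rⁿ` viewed as the element `Σ cᵢ Xⁱ` of `R[X]/(Xⁿ-1)`. -/
def toPoly (n : ℕ) (c : Fin n → R9) : Rn n :=
  ∑ i, ofR n (c i) * xbar n ^ (i : ℕ)

/-- The ring endomorphism of `R[X]/(Xⁿ-1)` induced by `X ↦ X^{n-1} = X⁻¹`. -/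
def invX (n : ℕ) : Rn n →+* Rn n :=
  Ideal.Quotient.lift _ (Polynomial.eval₂RingHom (ofR n) (xbar n ^ (n - 1)))
    (by
      intro a ha
      have hx : xbar n ^ n = 1 := by
        rw [xbar, ← map_pow, ← map_one (Ideal.Quotient.mk _),
          Ideal.Quotient.mk_eq_mk_iff_sub_mem]
        exact Ideal.subset_span rfl
      have h : Ideal.span {(X : Polynomial R9) ^ n - 1} ≤
          RingHom.ker (Polynomial.eval₂RingHom (ofR n) (xbar n ^ (n - 1))) := by
        rw [Ideal.span_le, Set.singleton_subset_iff]
        simp only [SetLike.mem_coe, RingHom.mem_ker, map_sub, map_pow, map_one,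
          Polynomial.coe_eval₂RingHom, Polynomial.eval₂_X]
        rw [← pow_mul, Nat.mul_comm, pow_mul, hx, one_pow, sub_self]
      exact h ha)

/-- The Euclidean dual of the cyclic code given by an ideal of `R[X]/(Xⁿ-1)`. -/
def dualCode (n : ℕ) (J : Ideal (Rn n)) : Set (Fin n → R9) :=
  {x | ∀ c : Fin n → R9, toPoly n c ∈ J → ∑ i, x i * c i = 0}

/-- The cyclic shift. -/
def shift {α : Type*} {n : ℕ} [NeZero n] (c : Fin n → α) : Fin n → α :=
  fun i => c (i - 1)

/-!
The Euclidean pairing `∑ xᵢ cᵢ` is the constant coefficient of `x(X) c(X⁻¹)` in `R[X]/(Xⁿ - 1)`,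
and the coefficient of `Xᵏ` is the pairing of `x` with the `k`-fold cyclic shift of `c`. Since a
cyclic code is an ideal, hence closed under shifts, `x ∈ C^⊥` iff `x(X) a(X⁻¹) = 0` for all
`a ∈ C`, which for `C = (e)` means `x(X) e(X⁻¹) = 0`. As `e(X⁻¹)` is idempotent, its annihilator
is the ideal generated by `1 - e(X⁻¹)`. Multiplication by the unit `X` makes the same criterion
invariant under the cyclic shift.
-/

instance : Nontrivial R9 := Ideal.Quotient.nontrivial_iff.mpr fun h => by
  have h1 : (1 : (ZMod 9)[X]) ∈ Ideal.span {X ^ 2 - X} := h ▸ Submodule.mem_top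
  obtain ⟨a, ha⟩ := Ideal.mem_span_singleton'.mp h1
  have h01 : (0 : ZMod 9) = 1 := by simpa using congrArg (eval 0) ha
  exact absurd h01 (by decide)

variable {n : ℕ}

lemma xbar_pow_self : xbar n ^ n = 1 := by
  rw [xbar, ← map_pow, ← map_one (Ideal.Quotient.mk _), Ideal.Quotient.mk_eq_mk_iff_sub_mem]
  exact Ideal.subset_span rfl

lemma xbar_pow_fin_add (a b : Fin n) :
    xbar n ^ ((a + b : Fin n) : ℕ) = xbar n ^ (a : ℕ) * xbar n ^ (b : ℕ) := by
  rw [Fin.val_add, ← pow_add, ← Nat.div_add_mod (a + b : ℕ) n, pow_add, pow_mul, xbar_pow_self,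
    one_pow, one_mul, Nat.div_add_mod]

lemma invX_ofR (r : R9) : invX n (ofR n r) = ofR n r :=
  eval₂_C _ _

variable [NeZero n]

lemma isUnit_xbar_pow (m : ℕ) : IsUnit (xbar n ^ m) :=
  (IsUnit.of_pow_eq_one xbar_pow_self (NeZero.ne n)).pow m

lemma invX_xbar_pow_fin (j : Fin n) : invX n (xbar n ^ (j : ℕ)) = xbar n ^ ((-j : Fin n) : ℕ) := by
  have hinv : invX n (xbar n ^ (j : ℕ)) * xbar n ^ (j : ℕ) = 1 := by
    rw [map_pow, show invX n (xbar n) = xbar n ^ (n - 1) from eval₂_X _ _, ← pow_mul, ← pow_add,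
      ← add_one_mul, Nat.sub_one_add_one (NeZero.ne n), pow_mul, xbar_pow_self, one_pow]
  have hneg : xbar n ^ (j : ℕ) * xbar n ^ ((-j : Fin n) : ℕ) = 1 := by
    rw [← xbar_pow_fin_add, add_neg_cancel, Fin.val_zero, pow_zero]
  exact left_inv_eq_right_inv hinv hneg

lemma monic_X_pow_sub_one : ((X : R9[X]) ^ n - 1).Monic := by
  simpa using monic_X_pow_sub_C (1 : R9) (NeZero.ne n)

def monomialPowerBasis : PowerBasis R9 (Rn n) := AdjoinRoot.powerBasis' monic_X_pow_sub_one

lemma monomialPowerBasis_dim : (monomialPowerBasis (n := n)).dim = n := by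
  change ((X : R9[X]) ^ n - 1).natDegree = n
  simpa using natDegree_X_pow_sub_C (n := n) (r := (1 : R9))

def monomialBasis : Module.Basis (Fin n) R9 (Rn n) :=
  monomialPowerBasis.basis.reindex (finCongr monomialPowerBasis_dim)

lemma monomialBasis_apply (i : Fin n) : monomialBasis i = xbar n ^ (i : ℕ) := by
  rw [monomialBasis, Module.Basis.reindex_apply, PowerBasis.basis_eq_pow]
  rfl

lemma toPoly_eq_equivFun_symm : toPoly n = monomialBasis.equivFun.symm := funext fun c => by
  simp only [Module.Basis.equivFun_symm_apply, monomialBasis_apply, Algebra.smul_def]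
  rfl

lemma toPoly_bijective : Function.Bijective (toPoly n) := by
  simpa only [toPoly_eq_equivFun_symm] using monomialBasis.equivFun.symm.bijective

lemma toPoly_zero : toPoly n 0 = 0 := by
  rw [toPoly_eq_equivFun_symm, map_zero]

lemma toPoly_comp_sub (v : Fin n → R9) (k : Fin n) :
    toPoly n (fun i => v (i - k)) = toPoly n v * xbar n ^ (k : ℕ) := by
  rw [toPoly, toPoly, Finset.sum_mul]
  refine (Fintype.sum_equiv (Equiv.addRight k) _ _ fun j => ?_).symm
  rw [Equiv.coe_addRight, add_sub_cancel_right, xbar_pow_fin_add, mul_assoc]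

lemma toPoly_mul_invX_toPoly (x c : Fin n → R9) :
    toPoly n x * invX n (toPoly n c) = toPoly n (fun k => ∑ i, x i * c (i - k)) := by
  have hterm : ∀ i j : Fin n, ofR n (x i) * xbar n ^ (i : ℕ) * invX n (ofR n (c j) * xbar n ^ (j : ℕ))
      = ofR n (x i * c j) * xbar n ^ ((i - j : Fin n) : ℕ) := fun i j => by
    rw [map_mul, invX_ofR, invX_xbar_pow_fin, sub_eq_add_neg i j, xbar_pow_fin_add, map_mul]
    ring
  calc toPoly n x * invX n (toPoly n c)
      = ∑ i, ∑ j, ofR n (x i * c j) * xbar n ^ ((i - j : Fin n) : ℕ) := by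
        simp only [toPoly, map_sum, Finset.sum_mul_sum, hterm]
    _ = ∑ i, ∑ k, ofR n (x i * c (i - k)) * xbar n ^ (k : ℕ) := by
        refine Finset.sum_congr rfl fun i _ => Fintype.sum_equiv (Equiv.subLeft i) _ _ fun k => ?_
        rw [Equiv.subLeft_apply, sub_sub_cancel]
    _ = toPoly n (fun k => ∑ i, x i * c (i - k)) := by
        rw [Finset.sum_comm]
        simp only [toPoly, map_sum, Finset.sum_mul]

lemma mem_dualCode_iff (J : Ideal (Rn n)) (x : Fin n → R9) :
    x ∈ dualCode n J ↔ ∀ a ∈ J, toPoly n x * invX n a = 0 := by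
  constructor
  · intro hx a ha
    obtain ⟨c, rfl⟩ := toPoly_bijective.2 a
    have hcorr : (fun k => ∑ i, x i * c (i - k)) = 0 := funext fun k =>
      hx _ (toPoly_comp_sub c k ▸ J.mul_mem_right _ ha)
    rw [toPoly_mul_invX_toPoly, hcorr, toPoly_zero]
  · intro hx c hc
    have hcorr : (fun k => ∑ i, x i * c (i - k)) = 0 := toPoly_bijective.1 <| by
      rw [← toPoly_mul_invX_toPoly, toPoly_zero, hx _ hc]
    simpa using congrFun hcorr 0

lemma shift_mem_dualCode_iff (J : Ideal (Rn n)) (x : Fin n → R9) :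
    shift x ∈ dualCode n J ↔ x ∈ dualCode n J := by
  have hshift : toPoly n (shift x) = toPoly n x * xbar n ^ ((1 : Fin n) : ℕ) :=
    toPoly_comp_sub x 1
  simp only [mem_dualCode_iff, hshift, mul_right_comm _ (xbar n ^ _),
    (isUnit_xbar_pow _).mul_left_eq_zero]

lemma shift_surjective {α : Type*} : Function.Surjective (shift : (Fin n → α) → Fin n → α) :=
  fun c => ⟨fun i => c (i + 1), funext fun i => congrArg c (sub_add_cancel i 1)⟩

lemma image_shift_dualCode (J : Ideal (Rn n)) : shift '' dualCode n J = dualCode n J := by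
  have hpre : shift ⁻¹' dualCode n J = dualCode n J := Set.ext (shift_mem_dualCode_iff J)
  nth_rewrite 1 [← hpre]
  exact shift_surjective.image_preimage _

lemma mem_dualCode_span_singleton_iff (e : Rn n) (x : Fin n → R9) :
    x ∈ dualCode n (Ideal.span {e}) ↔ toPoly n x * invX n e = 0 := by
  rw [mem_dualCode_iff]
  refine ⟨fun hx => hx e (Ideal.mem_span_singleton_self e), fun hx a ha => ?_⟩
  obtain ⟨b, rfl⟩ := Ideal.mem_span_singleton'.mp ha
  rw [map_mul, mul_left_comm, hx, mul_zero]

theorem stmt15_general (n : ℕ) [NeZero n] (Cc : Ideal (Rn n))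
    (e : Rn n) (he : IsIdempotentElem e) (hC : Cc = Ideal.span {e}) :
    shift '' dualCode n Cc = dualCode n Cc ∧
    IsIdempotentElem (1 - invX n e) ∧
    dualCode n Cc = {x | toPoly n x ∈ Ideal.span {1 - invX n e}} := by
  have hf : IsIdempotentElem (invX n e) := he.map (invX n)
  refine ⟨image_shift_dualCode Cc, hf.one_sub, Set.ext fun x => ?_⟩
  rw [hC, mem_dualCode_span_singleton_iff, Set.mem_ofPred_eq, ← hf.ker_toSpanSingleton_eq_span,
    LinearMap.mem_ker, LinearMap.toSpanSingleton_apply, smul_eq_mul]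

theorem stmt15 (n : ℕ) [NeZero n] (hn : Nat.Coprime n 3) (Cc : Ideal (Rn n))
    (e : Rn n) (he : IsIdempotentElem e) (hC : Cc = Ideal.span {e}) :
    shift '' dualCode n Cc = dualCode n Cc ∧
    IsIdempotentElem (1 - invX n e) ∧
    dualCode n Cc = {x | toPoly n x ∈ Ideal.span {1 - invX n e}} :=
  stmt15_general n Cc e he hC
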